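/- arXiv:2308.06082 — 7 statements merged into one kernel-verified Lean document; each statement's English description precedes it below -/
import Mathlib

section
/- Let n ≥ 32, let r, r' be integers with 0 ≤ r' < r ≤ 2^32 − 1, and let Y ∈ {0,1}^32. Then there does not exist X ∈ {0,1}^n such that inc^r(X) = X ⊕ (0^{n−32}‖Y) and inc^{r'}(X) = X ⊕ (0^{n−32}‖Y) hold simultaneously. -/
/-- `inc`: increment the last 32 bits (as a nonnegative integer) modulo `2^32`,
leaving the first `n - 32` bits unchanged. -/
def incBV (n : ℕ) (X : BitVec n) : BitVec n :=
  BitVec.ofNat n (X.toNat / 2 ^ 32 * 2 ^ 32 + (X.toNat % 2 ^ 32 + 1) % 2 ^ 32)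

lemma incBV_low (n : ℕ) (hn : 32 ≤ n) (X : BitVec n) :
    (incBV n X).toNat % 2 ^ 32 = (X.toNat % 2 ^ 32 + 1) % 2 ^ 32 := by
  have hdvd : (2 : ℕ) ^ 32 ∣ 2 ^ n := pow_dvd_pow 2 hn
  simp only [incBV, BitVec.toNat_ofNat]
  rw [Nat.mod_mod_of_dvd _ hdvd]
  omega

lemma incBV_iter_low (n : ℕ) (hn : 32 ≤ n) (k : ℕ) (X : BitVec n) :
    ((incBV n)^[k] X).toNat % 2 ^ 32 = (X.toNat % 2 ^ 32 + k) % 2 ^ 32 := by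
  induction k with
  | zero => simp
  | succ k ih =>
    rw [Function.iterate_succ_apply', incBV_low n hn, ih]
    omega

/-- For `0 ≤ r' < r ≤ 2^32 - 1` and `Y ∈ {0,1}^32`, there is no `X ∈ {0,1}ⁿ` with both
`inc^r(X) = X ⊕ (0^{n-32}‖Y)` and `inc^{r'}(X) = X ⊕ (0^{n-32}‖Y)`. -/
theorem no_common_inc_offset (n : ℕ) (hn : 32 ≤ n) (r r' : ℕ)
    (hr' : r' < r) (hr : r ≤ 2 ^ 32 - 1) (Y : BitVec 32) :
    ¬ ∃ X : BitVec n,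
        (incBV n)^[r] X = X ^^^ BitVec.ofNat n Y.toNat ∧
        (incBV n)^[r'] X = X ^^^ BitVec.ofNat n Y.toNat := by
  rintro ⟨X, h1, h2⟩
  have h := h1.trans h2.symm
  have hlow := congrArg (fun Z : BitVec n => Z.toNat % 2 ^ 32) h
  simp only [incBV_iter_low n hn] at hlow
  omega
end

section
/- For every integer r with 0 ≤ r ≤ 2^32 − 1, the set W_r has cardinality w_r ≤ 32; consequently w_max = max{ w_r : 0 ≤ r ≤ 2^32−1 } ≤ 32 = 2^5. -/
instance (w : ℕ) : Fintype (BitVec w) :=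
  Fintype.ofEquiv (Fin (2 ^ w)) ⟨BitVec.ofFin, BitVec.toFin, fun _ => rfl, fun _ => rfl⟩

/-- `Y_r = { bin_32(int(Y) + r mod 2^32) ⊕ Y : Y ∈ {0,1}^32 }`. -/
def Yset (r : ℕ) : Finset (BitVec 32) :=
  Finset.univ.image fun Y : BitVec 32 => BitVec.ofNat 32 (Y.toNat + r) ^^^ Y

/-- `W_0 = Y_0`, and `W_r = Y_r \\ (Y_0 ∪ Y_1 ∪ ⋯ ∪ Y_{r-1})` for `r ≥ 1`. -/
def Wset (r : ℕ) : Finset (BitVec 32) :=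
  Yset r \ (Finset.range r).biUnion Yset

/-- `w_max = max { #W_r : 0 ≤ r ≤ 2^32 - 1 }`. -/
def wmax : ℕ := (Finset.range (2 ^ 32)).sup fun r => (Wset r).card

private theorem aux_add_eq_xor_add_two_and : ∀ (a b : ℕ), a + b = (a ^^^ b) + 2 * (a &&& b) := by
  intro a
  induction a using Nat.strong_induction_on with
  | _ a IH =>
    intro b
    rcases Nat.eq_zero_or_pos a with h | h
    · simp [h]
    · have hd : a / 2 < a := Nat.div_lt_self h (by norm_num)
      have key := IH (a / 2) hd (b / 2)
      have hx : (a ^^^ b) = 2 * (a / 2 ^^^ b / 2) + (a ^^^ b) % 2 := by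
        conv_lhs => rw [← Nat.div_add_mod (a ^^^ b) 2]
        rw [Nat.xor_div_two]
      have ha : (a &&& b) = 2 * (a / 2 &&& b / 2) + (a &&& b) % 2 := by
        conv_lhs => rw [← Nat.div_add_mod (a &&& b) 2]
        rw [Nat.and_div_two]
      have h1 : (a ^^^ b) % 2 = (a + b) % 2 := Nat.xor_mod_two_eq
      have h2 : ((a &&& b) % 2 = 1) ↔ (a % 2 = 1 ∧ b % 2 = 1) := Nat.and_mod_two_eq_one
      have e1 : a = 2 * (a / 2) + a % 2 := (Nat.div_add_mod a 2).symm.trans (by ring_nf)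
      have e2 : b = 2 * (b / 2) + b % 2 := (Nat.div_add_mod b 2).symm.trans (by ring_nf)
      have m1 : a % 2 < 2 := Nat.mod_lt _ (by norm_num)
      have m2 : b % 2 < 2 := Nat.mod_lt _ (by norm_num)
      have m3 : (a &&& b) % 2 < 2 := Nat.mod_lt _ (by norm_num)
      omega

private theorem aux_disj_add {a b : ℕ} (h : a &&& b = 0) : a + b = a ^^^ b := by
  have := aux_add_eq_xor_add_two_and a b; omega

private theorem aux_xsplit (x y : ℕ) : x = (x &&& (x ^^^ y)) + (x &&& y) := by
  have hd : (x &&& (x ^^^ y)) &&& (x &&& y) = 0 := by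
    apply Nat.eq_of_testBit_eq; intro i
    simp only [Nat.testBit_land, Nat.testBit_xor, Nat.zero_testBit]
    cases x.testBit i <;> cases y.testBit i <;> rfl
  have hx : (x &&& (x ^^^ y)) ^^^ (x &&& y) = x := by
    apply Nat.eq_of_testBit_eq; intro i
    simp only [Nat.testBit_land, Nat.testBit_xor]
    cases x.testBit i <;> cases y.testBit i <;> rfl
  rw [aux_disj_add hd, hx]

private theorem aux_nsplit (x y : ℕ) :
    x ^^^ y = (x &&& (x ^^^ y)) + (y &&& (x ^^^ y)) := by
  have hd : (x &&& (x ^^^ y)) &&& (y &&& (x ^^^ y)) = 0 := by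
    apply Nat.eq_of_testBit_eq; intro i
    simp only [Nat.testBit_land, Nat.testBit_xor, Nat.zero_testBit]
    cases x.testBit i <;> cases y.testBit i <;> rfl
  have hx : (x &&& (x ^^^ y)) ^^^ (y &&& (x ^^^ y)) = x ^^^ y := by
    apply Nat.eq_of_testBit_eq; intro i
    simp only [Nat.testBit_land, Nat.testBit_xor]
    cases x.testBit i <;> cases y.testBit i <;> rfl
  rw [aux_disj_add hd, hx]

private theorem aux_pow_le_of_testBit {a t : ℕ} (h : a.testBit t = true) : 2 ^ t ≤ a := by
  by_contra hc
  rw [Nat.testBit_eq_false_of_lt (by omega)] at h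
  exact Bool.false_ne_true h

private theorem aux_key_nat {r y t : ℕ} (hy : y < 2 ^ 32) (hr : r < 2 ^ 32)
    (ht1 : 2 ^ t ≤ ((y + r) % 2 ^ 32) ^^^ y) (ht2 : ((y + r) % 2 ^ 32) ^^^ y < 2 ^ (t + 1)) :
    2 ^ (t + 1) ≤ r + (((y + r) % 2 ^ 32) ^^^ y) := by
  set x := (y + r) % 2 ^ 32 with hxdef
  set n := x ^^^ y with hndef
  have hX : x = (x &&& n) + (x &&& y) := aux_xsplit x y
  have hYd : y = (y &&& n) + (y &&& x) := by
    have := aux_xsplit y x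
    rwa [Nat.xor_comm y x, ← hndef] at this
  have hxy : x &&& y = y &&& x := Nat.land_comm x y
  have hN : n = (x &&& n) + (y &&& n) := aux_nsplit x y
  set A := x &&& n with hA
  set B := y &&& n with hB
  have hk : y + r = x + 2 ^ 32 * ((y + r) / 2 ^ 32) := by
    rw [hxdef]; omega
  set k := (y + r) / 2 ^ 32 with hkdef
  have hkle : k ≤ 1 := by
    have : y + r < 2 * 2 ^ 32 := by omega
    rw [hkdef]; omega
  have ht32 : t + 1 ≤ 32 := by
    by_contra hc
    have h1 : (2 : ℕ) ^ 32 ≤ 2 ^ t := Nat.pow_le_pow_right (by norm_num) (by omega)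
    have hx32 : x < 2 ^ 32 := by rw [hxdef]; exact Nat.mod_lt _ (by norm_num)
    have hnlt : n < 2 ^ 32 := Nat.xor_lt_two_pow hx32 hy
    omega
  have h232 : (2 : ℕ) ^ (t + 1) ≤ 2 ^ 32 := Nat.pow_le_pow_right (by norm_num) ht32
  have h2pow : (2 : ℕ) ^ (t + 1) = 2 * 2 ^ t := by ring
  rcases Nat.eq_zero_or_pos k with hk0 | hk1
  · have hxy' : y ≤ x := by omega
    have hBA : B ≤ A := by omega
    have hnt : n.testBit t = true := by
      rw [Nat.testBit_eq_decide_div_mod_eq]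
      have h1 : n / 2 ^ t = 1 := by
        apply Nat.div_eq_of_lt_le <;> omega
      simp [h1]
    have hor : A.testBit t = true ∨ B.testBit t = true := by
      have h3 : n.testBit t = (x.testBit t ^^ y.testBit t) := Nat.testBit_xor x y t
      cases hxt : x.testBit t with
      | true =>
        left; rw [hA, Nat.testBit_land, hxt, hnt]; rfl
      | false =>
        right
        have hyt : y.testBit t = true := by
          rw [h3, hxt] at hnt; simpa using hnt
        rw [hB, Nat.testBit_land, hyt, hnt]; rfl
    have hAt : 2 ^ t ≤ A := by
      rcases hor with hAt | hBt
      · exact aux_pow_le_of_testBit hAt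
      · have hBge : 2 ^ t ≤ B := aux_pow_le_of_testBit hBt
        omega
    omega
  · omega

private theorem aux_key {r : ℕ} (hr : r < 2 ^ 32) {Y Z : BitVec 32}
    (h : BitVec.ofNat 32 (Y.toNat + r) ^^^ Y = Z) {t : ℕ}
    (ht1 : 2 ^ t ≤ Z.toNat) (ht2 : Z.toNat < 2 ^ (t + 1)) :
    2 ^ (t + 1) ≤ r + Z.toNat := by
  have hxeq : ((Y.toNat + r) % 2 ^ 32) ^^^ Y.toNat = Z.toNat := by
    have := congrArg BitVec.toNat h
    rwa [BitVec.toNat_xor, BitVec.toNat_ofNat] at this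
  rw [← hxeq] at ht1 ht2 ⊢
  exact aux_key_nat Y.isLt hr ht1 ht2

private theorem aux_mem (Z : BitVec 32) {t : ℕ} (ht : t < 32)
    (ht1 : 2 ^ t ≤ Z.toNat) (ht2 : Z.toNat < 2 ^ (t + 1)) :
    Z ∈ Yset (2 ^ (t + 1) - Z.toNat) := by
  set n := Z.toNat with hn
  have hnlt : n < 2 ^ 32 := Z.isLt
  have h2 : 2 ^ (t + 1) = 2 * 2 ^ t := by ring
  have ht32 : (2 : ℕ) ^ t < 2 ^ 32 := Nat.pow_lt_pow_right (by norm_num) ht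
  refine Finset.mem_image.mpr ⟨BitVec.ofNat 32 (n - 2 ^ t), Finset.mem_univ _, ?_⟩
  have hYt : (BitVec.ofNat 32 (n - 2 ^ t)).toNat = n - 2 ^ t := by
    rw [BitVec.toNat_ofNat]; exact Nat.mod_eq_of_lt (by omega)
  apply BitVec.eq_of_toNat_eq
  rw [BitVec.toNat_xor, BitVec.toNat_ofNat, hYt]
  have hsum : n - 2 ^ t + (2 ^ (t + 1) - n) = 2 ^ t := by omega
  rw [hsum, Nat.mod_eq_of_lt ht32]
  have hdisj : 2 ^ t &&& (n - 2 ^ t) = 0 := by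
    apply Nat.eq_of_testBit_eq; intro i
    simp only [Nat.testBit_land, Nat.testBit_two_pow, Nat.zero_testBit]
    rcases eq_or_ne t i with rfl | hne
    · rw [Nat.testBit_eq_false_of_lt (by omega)]; simp
    · simp [hne]
  have := aux_disj_add hdisj
  omega

private theorem aux_card (r : ℕ) (hr : r < 2 ^ 32) : (Wset r).card ≤ 32 := by
  rcases Nat.eq_zero_or_pos r with rfl | hr1
  · have hsub : Wset 0 ⊆ {0} := by
      intro Z hZ
      have hZY : Z ∈ Yset 0 := (Finset.mem_sdiff.mp hZ).1
      obtain ⟨Y, -, hY⟩ := Finset.mem_image.mp hZY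
      simp only [Nat.add_zero, BitVec.ofNat_toNat, BitVec.setWidth_eq] at hY
      simp [← hY]
    exact le_trans (Finset.card_le_card hsub) (by simp)
  · have hsub : Wset r ⊆ (Finset.range 32).image fun t => BitVec.ofNat 32 (2 ^ (t + 1) - r) := by
      intro Z hZ
      obtain ⟨hZY, hZn⟩ := Finset.mem_sdiff.mp hZ
      have hZ0 : Z ≠ 0 := by
        rintro rfl
        apply hZn
        refine Finset.mem_biUnion.mpr ⟨0, Finset.mem_range.mpr hr1, ?_⟩
        refine Finset.mem_image.mpr ⟨0, Finset.mem_univ _, ?_⟩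
        simp
      have hn0 : Z.toNat ≠ 0 := by
        intro h; exact hZ0 (BitVec.eq_of_toNat_eq (by simp [h]))
      have ht1 : 2 ^ Z.toNat.log2 ≤ Z.toNat := Nat.log2_self_le hn0
      have ht2 : Z.toNat < 2 ^ (Z.toNat.log2 + 1) := Nat.lt_log2_self
      set t := Z.toNat.log2 with htdef
      have hnlt : Z.toNat < 2 ^ 32 := Z.isLt
      have ht32 : t < 32 := by
        by_contra hc
        have : (2 : ℕ) ^ 32 ≤ 2 ^ t := Nat.pow_le_pow_right (by norm_num) (by omega)
        omega
      obtain ⟨Y, -, hY⟩ := Finset.mem_image.mp hZY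
      have hkey : 2 ^ (t + 1) ≤ r + Z.toNat := aux_key hr hY ht1 ht2
      have hmem : Z ∈ Yset (2 ^ (t + 1) - Z.toNat) := aux_mem Z ht32 ht1 ht2
      have hge : r ≤ 2 ^ (t + 1) - Z.toNat := by
        by_contra hc
        exact hZn (Finset.mem_biUnion.mpr
          ⟨2 ^ (t + 1) - Z.toNat, Finset.mem_range.mpr (by omega), hmem⟩)
      have hneq : Z.toNat = 2 ^ (t + 1) - r := by omega
      refine Finset.mem_image.mpr ⟨t, Finset.mem_range.mpr ht32, ?_⟩
      apply BitVec.eq_of_toNat_eq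
      rw [BitVec.toNat_ofNat, ← hneq, Nat.mod_eq_of_lt hnlt]
    calc (Wset r).card ≤ _ := Finset.card_le_card hsub
      _ ≤ (Finset.range 32).card := Finset.card_image_le
      _ = 32 := Finset.card_range 32

/-- For every `0 ≤ r ≤ 2^32 - 1` the set `W_r` has cardinality `w_r ≤ 32`; consequently
`w_max = max { w_r : 0 ≤ r ≤ 2^32 - 1 } ≤ 32 = 2^5`. -/
theorem wmax_le_thirtytwo :
    (∀ r ≤ 2 ^ 32 - 1, (Wset r).card ≤ 32) ∧ wmax ≤ 32 ∧ (32 : ℕ) = 2 ^ 5 := by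
  refine ⟨fun r hr => aux_card r (by omega), ?_, by norm_num⟩
  exact Finset.sup_le fun r hr => aux_card r (Finset.mem_range.mp hr)
end

section
/- Let n ≥ 32 be even, let X, Y, X', Y' ∈ {0,1}^* with |X|, |Y|, |X'|, |Y'| < 2^{n/2} and not all four strings empty, let C, C' ∈ {0,1}^n, and let m be an integer with 1 ≤ m ≤ 2^32. Choose h_1, h_2 independently and uniformly at random from {0,1}^n and set S = C ⊕ H_{h_1}(X,Y) and S' = C' ⊕ H_{h_2}(X',Y'). Then Pr[ ⋁_{i=0}^{m−2} ( inc^i(S) ⊕ S' = 0 ) ] ≤ w_max · ℓ · (m−1) / 2^n, where ℓ is the maximum of the degrees of S and S' viewed as polynomials in h_1 and h_2 respectively. -/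
/-!
Fix a shift `i`. On a side whose two strings are not both empty, the hash is a polynomial in
its key of degree at most `ℓ` whose coefficient of `h` is the nonzero length block, and `inc^i`
and XOR with a constant are injective; so for each value of the other key, at most `ℓ` values
of this key give `inc^i(S) = S'`. This bounds the pairs for shift `i` by `ℓ·2ⁿ`; a union bound
over the `m - 1` shifts and `1 ≤ w_max` (as `W₀ = Y₀` is nonempty) finish the count.
-/

/-- Integer represented by a bit string (msb-first). -/
def bitsToNat : List Bool → ℕ
  | [] => 0
  | b :: t => (if b then 2 ^ t.length else 0) + bitsToNat t

/-- An `n`-bit block from a bit string of length at most `n` (msb-first). -/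
def blockToBV (n : ℕ) (l : List Bool) : BitVec n := BitVec.ofNat n (bitsToNat l)

/-- `pad`: append zeros on the right to get a full `n`-bit block. -/
def padBlock (n : ℕ) (l : List Bool) : BitVec n :=
  blockToBV n (l ++ List.replicate (n - l.length) false)

/-- `parse_n` followed by padding of the last block. -/
def blocksOf (n : ℕ) (Z : List Bool) : List (BitVec n) :=
  (Z.toChunks n).map (padBlock n)

/-- Number of `n`-bit blocks obtained from parsing `Z`. -/
def numBlocks (n : ℕ) (Z : List Bool) : ℕ := (Z.toChunks n).length

/-- The length block `bin_{n/2}(|X|) ‖ bin_{n/2}(|T|)`. -/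
def xcbLenBlock (n : ℕ) (X T : List Bool) : BitVec n :=
  BitVec.ofNat n (X.length * 2 ^ (n / 2) + T.length)

/-- The XCB hash `H_h(X,T) = X₁h^{m+p+1} ⊕ ⋯ ⊕ pad(X_m)h^{p+2} ⊕ T₁h^{p+1} ⊕ ⋯ ⊕
pad(T_p)h² ⊕ (bin_{n/2}(|X|)‖bin_{n/2}(|T|))h`, computed by Horner evaluation,
where the equivalence `ι` identifies `{0,1}ⁿ` with `GF(2ⁿ)` (XOR = addition). -/
def xcbHash {n : ℕ} {F : Type*} [Field F] (ι : BitVec n ≃ F) (h : F)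
    (X T : List Bool) : F :=
  ((blocksOf n X ++ blocksOf n T).map ι ++ [ι (xcbLenBlock n X T)]).foldl
    (fun acc c => (acc + c) * h) 0

open Finset

section Horner

open Polynomial

variable {F : Type*} [Field F]

lemma eval_foldl_horner (L : List F) (x : F) (p : F[X]) :
    (L.foldl (fun q c => (q + C c) * X) p).eval x =
      L.foldl (fun a c => (a + c) * x) (p.eval x) := by
  induction L generalizing p with
  | nil => rfl
  | cons c L ih => simp [ih]

lemma coeff_zero_foldl_horner (L : List F) {p : F[X]} (hp : p.coeff 0 = 0) :
    (L.foldl (fun q c => (q + C c) * X) p).coeff 0 = 0 := by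
  induction L generalizing p with
  | nil => exact hp
  | cons c L ih => exact ih (by simp)

lemma natDegree_foldl_horner_le (L : List F) (p : F[X]) :
    (L.foldl (fun q c => (q + C c) * X) p).natDegree ≤ p.natDegree + L.length := by
  induction L generalizing p with
  | nil => simp
  | cons c L ih =>
    have hstep : ((p + C c) * X).natDegree ≤ p.natDegree + 1 :=
      natDegree_mul_le.trans (by simp)
    rw [List.foldl_cons, List.length_cons]
    exact (ih _).trans (by omega)

-- `c` is the coefficient of `X` in the Horner polynomial, so it is not constant.
lemma card_filter_foldl_horner_eq_le [DecidableEq F] (s : Finset F) (L : List F) {c : F}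
    (hc : c ≠ 0) (a : F) :
    #{x ∈ s | (L ++ [c]).foldl (fun b d => (b + d) * x) 0 = a} ≤ L.length + 1 := by
  set P : F[X] := (L ++ [c]).foldl (fun q d => (q + C d) * X) 0 with hP
  have hP_eval (x : F) : P.eval x = (L ++ [c]).foldl (fun b d => (b + d) * x) 0 := by
    rw [hP, eval_foldl_horner, eval_zero]
  have hP_coeff : P.coeff 1 = c := by
    rw [hP, List.foldl_append, List.foldl_cons, List.foldl_nil, coeff_mul_X, coeff_add,
      coeff_zero_foldl_horner _ (coeff_zero 0), coeff_C_zero, zero_add]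
  have hP_deg : P.natDegree ≤ L.length + 1 := by
    simpa [← hP] using natDegree_foldl_horner_le (L ++ [c]) 0
  have hQ : P - C a ≠ 0 := fun h => hc (by simpa [hP_coeff] using congrArg (coeff · 1) h)
  calc #{x ∈ s | (L ++ [c]).foldl (fun b d => (b + d) * x) 0 = a}
      ≤ #(P - C a).roots.toFinset :=
        card_le_card fun x hx => by
          rw [mem_filter] at hx
          rw [Multiset.mem_toFinset, mem_roots hQ, IsRoot, eval_sub, eval_C, hP_eval, hx.2,
            sub_self]
    _ ≤ (P - C a).natDegree := (Multiset.toFinset_card_le _).trans (card_roots' _)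
    _ ≤ L.length + 1 := natDegree_sub_C.le.trans hP_deg

end Horner

section Counting

variable {α β γ : Type*}

lemma card_filter_comp_eq_le_of_injective [DecidableEq β] [DecidableEq γ] (s : Finset α)
    {f : α → β} {φ : β → γ} (hφ : φ.Injective) {k : ℕ} (hf : ∀ b, #{a ∈ s | f a = b} ≤ k)
    (c : γ) : #{a ∈ s | φ (f a) = c} ≤ k := by
  by_cases hc : ∃ b, φ b = c
  · obtain ⟨b, rfl⟩ := hc
    simpa only [hφ.eq_iff] using hf b
  · rw [filter_false_of_mem fun a _ h => hc ⟨f a, h⟩, card_empty]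
    exact k.zero_le

lemma card_filter_prod_eq_le_left [Fintype α] [Fintype β] [DecidableEq γ] {f : α → γ}
    (g : β → γ) {k : ℕ} (hf : ∀ c, #{a | f a = c} ≤ k) :
    #{p : α × β | f p.1 = g p.2} ≤ k * Fintype.card β := by
  classical
  refine card_le_mul_card_image_of_maps_to (f := Prod.snd) (fun _ _ => mem_univ _) k
    fun b _ => (card_le_card_of_injOn Prod.fst ?_ ?_).trans (hf (g b))
  · intro p hp
    simp only [coe_filter, mem_filter, mem_univ, true_and, Set.mem_ofPred_eq] at hp ⊢
    rw [hp.1, hp.2]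
  · intro p hp q hq hpq
    simp only [coe_filter, mem_filter, mem_univ, true_and, Set.mem_ofPred_eq] at hp hq
    exact Prod.ext hpq (hp.2.trans hq.2.symm)

lemma card_filter_prod_eq_le_right [Fintype α] [Fintype β] [DecidableEq γ] (f : α → γ)
    {g : β → γ} {k : ℕ} (hg : ∀ c, #{b | g b = c} ≤ k) :
    #{p : α × β | f p.1 = g p.2} ≤ k * Fintype.card α := by
  calc #{p : α × β | f p.1 = g p.2} = #{p : β × α | g p.1 = f p.2} :=
        card_equiv (Equiv.prodComm α β) fun p => by simp [eq_comm]
    _ ≤ k * Fintype.card α := card_filter_prod_eq_le_left f hg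

lemma card_filter_exists_lt_le [Fintype α] [DecidableEq α] (P : ℕ → α → Prop)
    [∀ i, DecidablePred (P i)] {r k : ℕ} (h : ∀ i < r, #{a | P i a} ≤ k) :
    #{a | ∃ i < r, P i a} ≤ r * k := by
  calc #{a | ∃ i < r, P i a} ≤ #((range r).biUnion fun i => {a | P i a}) :=
        card_le_card fun a ha => by simpa using ha
    _ ≤ #(range r) * k := card_biUnion_le_card_mul _ _ _ fun i hi => h i (mem_range.1 hi)
    _ = r * k := by rw [card_range]

end Counting

lemma card_bitVec (n : ℕ) : Fintype.card (BitVec n) = 2 ^ n :=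
  (Fintype.ofEquiv_card _).trans (Fintype.card_fin _)

lemma incBV_injective {n : ℕ} (hn : 32 ≤ n) : (incBV n).Injective := by
  have h2n : 2 ^ n = 2 ^ (n - 32) * 2 ^ 32 := by rw [← pow_add, Nat.sub_add_cancel hn]
  have htoNat (x : BitVec n) : (incBV n x).toNat =
      x.toNat / 2 ^ 32 * 2 ^ 32 + (x.toNat % 2 ^ 32 + 1) % 2 ^ 32 := by
    have := x.isLt
    rw [incBV, BitVec.toNat_ofNat, Nat.mod_eq_of_lt]
    omega
  intro x y hxy
  have := congrArg BitVec.toNat hxy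
  rw [htoNat, htoNat] at this
  exact BitVec.eq_of_toNat_eq (by omega)

lemma one_le_wmax : 1 ≤ wmax := by
  have hW0 : (Wset 0).Nonempty := by simp [Wset, Yset]
  exact hW0.card_pos.trans_le (le_sup (f := fun r => #(Wset r)) (mem_range.2 (by norm_num)))

lemma xcbLenBlock_ne_zero {n : ℕ} {Z T : List Bool} (hZ : Z.length < 2 ^ (n / 2))
    (hT : T.length < 2 ^ (n / 2)) (hZT : ¬ (Z = [] ∧ T = [])) : xcbLenBlock n Z T ≠ 0 := by
  set K := 2 ^ (n / 2)
  have hK : 0 < K := by positivity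
  have hKK : K * K ≤ 2 ^ n := by
    rw [← pow_add]
    exact Nat.pow_le_pow_right two_pos (by omega)
  have hlt : Z.length * K + T.length < 2 ^ n :=
    calc Z.length * K + T.length < (Z.length + 1) * K := by rw [add_one_mul]; omega
      _ ≤ K * K := Nat.mul_le_mul_right K hZ
      _ ≤ 2 ^ n := hKK
  have hpos : 0 < Z.length * K + T.length := by
    simp only [not_and_or, ← ne_eq, ← List.length_pos_iff] at hZT
    rcases hZT with hZ0 | hT0
    · have := Nat.mul_pos hZ0 hK
      omega
    · omega
  intro h
  have h0 : (xcbLenBlock n Z T).toNat = 0 := by simp [h]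
  rw [xcbLenBlock, BitVec.toNat_ofNat, Nat.mod_eq_of_lt hlt] at h0
  omega

lemma card_filter_xcbHash_eq_le {n : ℕ} {F : Type*} [Field F] [DecidableEq F]
    (ι : BitVec n ≃ F) (hι0 : ι 0 = 0) {Z T : List Bool} (hZT : xcbLenBlock n Z T ≠ 0)
    (a : F) : #{h : BitVec n | xcbHash ι (ι h) Z T = a} ≤ numBlocks n Z + numBlocks n T + 1 := by
  have hc : ι (xcbLenBlock n Z T) ≠ 0 := hι0 ▸ ι.injective.ne hZT
  calc #{h : BitVec n | xcbHash ι (ι h) Z T = a}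
      = #{x ∈ univ.map ι.toEmbedding | xcbHash ι x Z T = a} := by
        rw [filter_map, card_map]
        rfl
    _ ≤ ((blocksOf n Z ++ blocksOf n T).map ι).length + 1 :=
        card_filter_foldl_horner_eq_le _ _ hc a
    _ = numBlocks n Z + numBlocks n T + 1 := by simp [blocksOf, numBlocks]

lemma card_filter_xcbHash_comp_eq_le {n : ℕ} {F : Type*} [Field F] (ι : BitVec n ≃ F)
    (hι0 : ι 0 = 0) {Z T : List Bool} (hZ : Z.length < 2 ^ (n / 2))
    (hT : T.length < 2 ^ (n / 2)) (hZT : ¬ (Z = [] ∧ T = [])) (u : BitVec n → BitVec n)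
    (hu : u.Injective) (c : BitVec n) :
    #{h : BitVec n | u (ι.symm (xcbHash ι (ι h) Z T)) = c} ≤
      numBlocks n Z + numBlocks n T + 1 := by
  classical
  exact card_filter_comp_eq_le_of_injective univ (φ := u ∘ ι.symm) (hu.comp ι.symm.injective)
    (card_filter_xcbHash_eq_le ι hι0 (xcbLenBlock_ne_zero hZ hT hZT)) c

theorem inc_collision_prob_two_keys_general (n : ℕ) (hn : 32 ≤ n)
    (F : Type*) [Field F] (ι : BitVec n ≃ F)
    (hι : ∀ x y : BitVec n, ι (x ^^^ y) = ι x + ι y)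
    (X Y X' Y' : List Bool) (hne : ¬ (X = [] ∧ Y = [] ∧ X' = [] ∧ Y' = []))
    (hX : X.length < 2 ^ (n / 2)) (hY : Y.length < 2 ^ (n / 2))
    (hX' : X'.length < 2 ^ (n / 2)) (hY' : Y'.length < 2 ^ (n / 2))
    (C C' : BitVec n) (m : ℕ)
    (ℓ : ℕ) (hℓ : ℓ = max (numBlocks n X + numBlocks n Y + 1)
      (numBlocks n X' + numBlocks n Y' + 1)) :
    (Nat.card {hks : BitVec n × BitVec n //
        ∃ i < m - 1,
          (incBV n)^[i] (C ^^^ ι.symm (xcbHash ι (ι hks.1) X Y)) =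
            C' ^^^ ι.symm (xcbHash ι (ι hks.2) X' Y')} : ℝ) /
        ((2 : ℝ) ^ n * (2 : ℝ) ^ n) ≤
      ((wmax * ℓ * (m - 1) : ℕ) : ℝ) / ((2 : ℝ) ^ n) := by
  have hι0 : ι 0 = 0 := by simpa using hι 0 0
  set S : ℕ → BitVec n → BitVec n :=
    fun i h => (incBV n)^[i] (C ^^^ ι.symm (xcbHash ι (ι h) X Y))
  set S' : BitVec n → BitVec n := fun h => C' ^^^ ι.symm (xcbHash ι (ι h) X' Y')
  have hS_inj (i : ℕ) : (fun t => (incBV n)^[i] (C ^^^ t)).Injective :=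
    ((incBV_injective hn).iterate i).comp fun _ _ => (BitVec.xor_right_inj C).1
  have hS'_inj : (C' ^^^ ·).Injective := fun _ _ => (BitVec.xor_right_inj C').1
  have hcollision (i : ℕ) :
      #{hks : BitVec n × BitVec n | S i hks.1 = S' hks.2} ≤ ℓ * 2 ^ n := by
    rw [← card_bitVec n]
    by_cases hXY : X = [] ∧ Y = []
    · have hXY' : ¬ (X' = [] ∧ Y' = []) := fun h => hne ⟨hXY.1, hXY.2, h⟩
      refine card_filter_prod_eq_le_right (S i) fun c => ?_
      exact (card_filter_xcbHash_comp_eq_le ι hι0 hX' hY' hXY' _ hS'_inj c).trans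
        (hℓ ▸ le_max_right _ _)
    · refine card_filter_prod_eq_le_left S' fun c => ?_
      exact (card_filter_xcbHash_comp_eq_le ι hι0 hX hY hXY _ (hS_inj i) c).trans
        (hℓ ▸ le_max_left _ _)
  have hcount : Nat.card {hks : BitVec n × BitVec n // ∃ i < m - 1, S i hks.1 = S' hks.2} ≤
      wmax * ℓ * (m - 1) * 2 ^ n := by
    rw [Nat.card_eq_fintype_card, Fintype.card_subtype]
    calc _ ≤ (m - 1) * (ℓ * 2 ^ n) :=
          card_filter_exists_lt_le (fun i (hks : BitVec n × BitVec n) => S i hks.1 = S' hks.2)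
            fun i _ => hcollision i
      _ = 1 * ℓ * (m - 1) * 2 ^ n := by ring
      _ ≤ wmax * ℓ * (m - 1) * 2 ^ n := by gcongr; exact one_le_wmax
  rw [div_le_div_iff₀ (by positivity) (by positivity), ← mul_assoc]
  gcongr
  exact_mod_cast hcount

/-- Part 2 of Lemma 4.0.2: with two independent random hash keys `h₁, h₂`, for
`S = C ⊕ H_{h₁}(X,Y)` and `S' = C' ⊕ H_{h₂}(X',Y')` (not all of `X, Y, X', Y'` empty),
`Pr[⋁_{i=0}^{m-2} inc^i(S) = S'] ≤ w_max·ℓ·(m-1)/2ⁿ`, where `ℓ` is the maximum of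
the degrees of `S` and `S'` as polynomials in `h₁` resp. `h₂`. -/
theorem inc_collision_prob_two_keys (n : ℕ) (hn : 32 ≤ n) (hEven : Even n)
    (F : Type*) [Field F] (ι : BitVec n ≃ F)
    (hι : ∀ x y : BitVec n, ι (x ^^^ y) = ι x + ι y)
    (X Y X' Y' : List Bool) (hne : ¬ (X = [] ∧ Y = [] ∧ X' = [] ∧ Y' = []))
    (hX : X.length < 2 ^ (n / 2)) (hY : Y.length < 2 ^ (n / 2))
    (hX' : X'.length < 2 ^ (n / 2)) (hY' : Y'.length < 2 ^ (n / 2))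
    (C C' : BitVec n) (m : ℕ) (hm1 : 1 ≤ m) (hm2 : m ≤ 2 ^ 32)
    (ℓ : ℕ) (hℓ : ℓ = max (numBlocks n X + numBlocks n Y + 1)
      (numBlocks n X' + numBlocks n Y' + 1)) :
    (Nat.card {hks : BitVec n × BitVec n //
        ∃ i < m - 1,
          (incBV n)^[i] (C ^^^ ι.symm (xcbHash ι (ι hks.1) X Y)) =
            C' ^^^ ι.symm (xcbHash ι (ι hks.2) X' Y')} : ℝ) /
        ((2 : ℝ) ^ n * (2 : ℝ) ^ n) ≤
      ((wmax * ℓ * (m - 1) : ℕ) : ℝ) / ((2 : ℝ) ^ n) :=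
  inc_collision_prob_two_keys_general n hn F ι hι X Y X' Y' hne hX hY hX' hY' C C' m ℓ hℓ
end

section
/- Let n be even, let X, T, X', T' ∈ {0,1}^* with (X,T) ≠ (X',T') and |X|, |T|, |X'|, |T'| < 2^{n/2}, and let D ∈ {0,1}^n be arbitrary. If h is chosen uniformly at random from {0,1}^n, then Pr[ H_h(X,T) ⊕ H_h(X',T') = D ] ≤ ℓ / 2^n, where ℓ = max{ m+p+1, m'+p'+1 } is the maximum of the degrees of H_h(X,T) and H_h(X',T') as polynomials in h (m, p and m', p' being the respective numbers of parsed blocks of X, T and X', T'). -/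
/-!
`H_h(X,T)` is the value at `h` of a polynomial of degree at most `m + p + 1` without constant
term, whose coefficients are the padded blocks of `X` and `T` followed by the length block. Since
`|X|, |T| < 2^{n/2}`, the length block recovers `|X|` and `|T|`; once the lengths are known,
parsing and padding are injective, so distinct inputs give distinct polynomials. XOR being
addition, `F` has characteristic two, so the sum of the two polynomials differs from the
constant `D`, and as a polynomial of degree at most `ℓ` it takes the value `D` at most `ℓ` times.
-/

namespace List

variable {α : Type*}

theorem toChunks_go_eq (k : ℕ) : ∀ (xs : List α) (a₁ : Array α) (a₂ : Array (List α)),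
    0 < a₁.size → a₁.size ≤ k + 1 →
    toChunks.go (k + 1) xs a₁ a₂ = a₂.toList ++
      (a₁.toList ++ xs.take (k + 1 - a₁.size)) :: (xs.drop (k + 1 - a₁.size)).toChunks (k + 1)
  | [], a₁, a₂, _, _ => by simp [toChunks.go, toChunks]
  | x :: xs, a₁, a₂, hpos, hle => by
    rw [toChunks.go]
    by_cases hfull : a₁.size = k + 1
    · rw [if_pos (by simpa using hfull), toChunks_go_eq k xs _ _ (by simp) (by simp)]
      simp [hfull, toChunks, toChunks_go_eq k xs #[x] #[] (by simp) (by simp)]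
    · rw [if_neg (by simpa using hfull), toChunks_go_eq k xs _ _ (by simp) (by simp; omega)]
      obtain ⟨j, hj⟩ : ∃ j, k + 1 - a₁.size = j + 1 := ⟨k - a₁.size, by omega⟩
      simp [hj, show k + 1 - (a₁.size + 1) = j by omega]

theorem toChunks_succ_cons (k : ℕ) (x : α) (xs : List α) :
    (x :: xs).toChunks (k + 1) = (x :: xs.take k) :: (xs.drop k).toChunks (k + 1) := by
  simp [toChunks, toChunks_go_eq k xs #[x] #[] (by simp) (by simp)]

theorem length_toChunks_succ (k : ℕ) : ∀ l : List α,
    (l.toChunks (k + 1)).length = (l.length + k) / (k + 1)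
  | [] => by simp [toChunks, Nat.div_eq_of_lt]
  | x :: xs => by
    rw [toChunks_succ_cons, length_cons, length_toChunks_succ k (xs.drop k), length_drop,
      length_cons]
    rcases le_or_gt k xs.length with hk | hk
    · rw [Nat.sub_add_cancel hk, ← Nat.add_div_right _ k.succ_pos]
      congr 1
      omega
    · rw [Nat.sub_eq_zero_of_le hk.le, zero_add, Nat.div_eq_of_lt k.lt_succ_self,
        Nat.div_eq_of_lt_le (k := 1) (by omega) (by omega)]
termination_by l => l.length

theorem eq_of_map_toChunks_eq {β : Type*} {f : List α → β} (k : ℕ)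
    (hf : ∀ l l' : List α, l.length = l'.length → l.length ≤ k + 1 → f l = f l' → l = l') :
    ∀ Z Z' : List α, Z.length = Z'.length →
      (Z.toChunks (k + 1)).map f = (Z'.toChunks (k + 1)).map f → Z = Z'
  | [], [], _, _ => rfl
  | x :: xs, y :: ys, hlen, h => by
    rw [toChunks_succ_cons, toChunks_succ_cons, map_cons, map_cons, cons.injEq] at h
    rw [length_cons, length_cons, Nat.add_right_cancel_iff] at hlen
    have hhead : x :: xs.take k = y :: ys.take k := hf _ _ (by simp [hlen]) (by simp) h.1
    have htail : xs.drop k = ys.drop k :=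
      eq_of_map_toChunks_eq k hf _ _ (by simp [hlen]) h.2
    rw [cons.injEq] at hhead
    rw [hhead.1, ← take_append_drop k xs, ← take_append_drop k ys, hhead.2, htail]
termination_by Z => Z.length

end List

theorem bitsToNat_lt_two_pow (l : List Bool) : bitsToNat l < 2 ^ l.length := by
  induction l with
  | nil => simp [bitsToNat]
  | cons b t ih =>
    rw [bitsToNat, List.length_cons, pow_succ]
    split <;> omega

theorem bitsToNat_inj : ∀ {a b : List Bool}, a.length = b.length →
    bitsToNat a = bitsToNat b → a = b
  | [], [], _, _ => rfl
  | x :: xs, y :: ys, hlen, h => by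
    rw [List.length_cons, List.length_cons, Nat.add_right_cancel_iff] at hlen
    have hxs := bitsToNat_lt_two_pow xs
    have hys := bitsToNat_lt_two_pow ys
    rw [bitsToNat, bitsToNat, hlen] at h
    rw [hlen] at hxs
    -- the leading bit is decided by comparing with `2 ^ ys.length`
    have hxy : x = y := by
      cases x <;> cases y <;> simp only [Bool.false_eq_true, ↓reduceIte] at h ⊢ <;> omega
    subst hxy
    rw [bitsToNat_inj hlen (by omega)]

theorem blockToBV_inj {n : ℕ} {a b : List Bool} (ha : a.length = n) (hb : b.length = n)
    (h : blockToBV n a = blockToBV n b) : a = b := by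
  have hval := congrArg BitVec.toNat h
  rw [blockToBV, blockToBV, BitVec.toNat_ofNat, BitVec.toNat_ofNat,
    Nat.mod_eq_of_lt (ha ▸ bitsToNat_lt_two_pow a),
    Nat.mod_eq_of_lt (hb ▸ bitsToNat_lt_two_pow b)] at hval
  exact bitsToNat_inj (ha.trans hb.symm) hval

theorem padBlock_inj {n : ℕ} {l l' : List Bool} (hlen : l.length = l'.length)
    (hn : l.length ≤ n) (h : padBlock n l = padBlock n l') : l = l' := by
  rw [padBlock, padBlock, hlen] at h
  exact List.append_cancel_right
    (blockToBV_inj (by rw [List.length_append, List.length_replicate]; omega)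
      (by rw [List.length_append, List.length_replicate]; omega) h)

@[simp]
theorem length_blocksOf (n : ℕ) (Z : List Bool) : (blocksOf n Z).length = numBlocks n Z := by
  simp [blocksOf, numBlocks]

theorem numBlocks_eq {n : ℕ} (hn : 0 < n) (Z : List Bool) :
    numBlocks n Z = (Z.length + n - 1) / n := by
  obtain ⟨k, rfl⟩ : ∃ k, n = k + 1 := ⟨n - 1, by omega⟩
  simp [numBlocks, List.length_toChunks_succ]

theorem blocksOf_inj {n : ℕ} (hn : 0 < n) {Z Z' : List Bool} (hlen : Z.length = Z'.length)
    (h : blocksOf n Z = blocksOf n Z') : Z = Z' := by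
  obtain ⟨k, rfl⟩ : ∃ k, n = k + 1 := ⟨n - 1, by omega⟩
  exact List.eq_of_map_toChunks_eq k (fun _ _ hlen hle => padBlock_inj hlen (by omega)) _ _
    hlen h

theorem Nat.eq_and_eq_of_mul_add_eq {a b c d B : ℕ} (hb : b < B) (hd : d < B)
    (h : a * B + b = c * B + d) : a = c ∧ b = d := by
  have hB : 0 < B := by omega
  refine ⟨?_, ?_⟩
  · simpa [Nat.add_mul_div_right, Nat.div_eq_of_lt, hb, hd, hB, add_comm] using
      congrArg (· / B) h
  · simpa [Nat.add_mod, Nat.mod_eq_of_lt, hb, hd] using congrArg (· % B) h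

theorem length_eq_of_xcbLenBlock_eq {n : ℕ} (hn : Even n) {X T X' T' : List Bool}
    (hX : X.length < 2 ^ (n / 2)) (hT : T.length < 2 ^ (n / 2))
    (hX' : X'.length < 2 ^ (n / 2)) (hT' : T'.length < 2 ^ (n / 2))
    (h : xcbLenBlock n X T = xcbLenBlock n X' T') :
    X.length = X'.length ∧ T.length = T'.length := by
  set B := 2 ^ (n / 2)
  have hsq : 2 ^ n = B * B := by
    rw [← pow_add]
    congr 1
    have := Nat.two_mul_div_two_of_even hn
    omega
  have hlt : ∀ {a b : ℕ}, a < B → b < B → a * B + b < 2 ^ n := fun ha hb => by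
    rw [hsq]
    nlinarith
  have hval := congrArg BitVec.toNat h
  rw [xcbLenBlock, xcbLenBlock, BitVec.toNat_ofNat, BitVec.toNat_ofNat,
    Nat.mod_eq_of_lt (hlt hX hT), Nat.mod_eq_of_lt (hlt hX' hT')] at hval
  exact Nat.eq_and_eq_of_mul_add_eq hT hT' hval

open Polynomial

section Horner

variable {R : Type*} [CommRing R]

-- `hornerPoly [c₁, …, c_m] = c₁ X^m + ⋯ + c_m X`
noncomputable def hornerPoly (L : List R) : R[X] :=
  L.foldl (fun p c => (p + C c) * X) 0

@[simp]
theorem hornerPoly_nil : hornerPoly ([] : List R) = 0 := rfl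

@[simp]
theorem hornerPoly_append_singleton (L : List R) (c : R) :
    hornerPoly (L ++ [c]) = (hornerPoly L + C c) * X := by
  simp [hornerPoly]

theorem eval_hornerPoly (L : List R) (x : R) :
    (hornerPoly L).eval x = L.foldl (fun a c => (a + c) * x) 0 := by
  induction L using List.reverseRecOn with
  | nil => simp
  | append_singleton L c ih => simp [ih]

theorem natDegree_hornerPoly_le (L : List R) : (hornerPoly L).natDegree ≤ L.length := by
  induction L using List.reverseRecOn with
  | nil => simp
  | append_singleton L c ih =>
    rw [hornerPoly_append_singleton, List.length_append, List.length_singleton]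
    exact natDegree_mul_le_of_le (natDegree_add_le_of_degree_le ih (by simp)) natDegree_X_le

theorem coeff_hornerPoly_zero (L : List R) : (hornerPoly L).coeff 0 = 0 := by
  induction L using List.reverseRecOn with
  | nil => simp
  | append_singleton L c _ => simp

theorem hornerPoly_append_singleton_inj {L L' : List R} {c c' : R} :
    hornerPoly (L ++ [c]) = hornerPoly (L' ++ [c']) ↔ hornerPoly L = hornerPoly L' ∧ c = c' := by
  refine ⟨fun h => ?_, fun ⟨hL, hc⟩ => by rw [hornerPoly_append_singleton, hL, hc]; simp⟩
  rw [hornerPoly_append_singleton, hornerPoly_append_singleton] at h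
  have h' := isRegular_X.right h
  have hc : c = c' := by simpa [coeff_hornerPoly_zero] using congrArg (coeff · 0) h'
  exact ⟨by simpa [hc] using h', hc⟩

theorem hornerPoly_inj {L L' : List R} (hlen : L.length = L'.length)
    (h : hornerPoly L = hornerPoly L') : L = L' := by
  induction L using List.reverseRecOn generalizing L' with
  | nil => exact (List.eq_nil_of_length_eq_zero hlen.symm).symm
  | append_singleton L c ih =>
    obtain ⟨M', c', rfl⟩ : ∃ M' c', L' = M' ++ [c'] := by
      rcases L'.eq_nil_or_concat with rfl | hL'
      · simp at hlen
      · simpa using hL'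
    obtain ⟨hL, rfl⟩ := hornerPoly_append_singleton_inj.mp h
    rw [ih (by simpa using hlen) hL]

end Horner

theorem Polynomial.card_eval_eq_le {R : Type*} [CommRing R] [IsDomain R] {p : R[X]} {a : R}
    (hp : p ≠ C a) : Nat.card {x : R // p.eval x = a} ≤ p.natDegree := by
  classical
  have hset : {x : R | p.eval x = a} = ↑(p - C a).roots.toFinset := by
    ext x
    rw [Set.mem_ofPred_eq, Finset.mem_coe, Multiset.mem_toFinset, mem_roots_sub_C']
    exact (and_iff_right hp).symm
  calc Nat.card {x : R // p.eval x = a} = ((p - C a).roots.toFinset).card := by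
        rw [← Set.coe_ofPred, hset, Nat.card_coe_set_eq, Set.ncard_coe_finset]
    _ ≤ Multiset.card (p - C a).roots := Multiset.toFinset_card_le _
    _ ≤ (p - C a).natDegree := card_roots' _
    _ = p.natDegree := natDegree_sub_C

section XCB

variable {n : ℕ} {F : Type*} [Field F] (ι : BitVec n ≃ F)

noncomputable def xcbPoly (X T : List Bool) : F[X] :=
  hornerPoly ((blocksOf n X ++ blocksOf n T).map ι ++ [ι (xcbLenBlock n X T)])

theorem eval_xcbPoly (X T : List Bool) (h : F) : (xcbPoly ι X T).eval h = xcbHash ι h X T :=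
  eval_hornerPoly _ h

theorem natDegree_xcbPoly_le (X T : List Bool) :
    (xcbPoly ι X T).natDegree ≤ numBlocks n X + numBlocks n T + 1 :=
  (natDegree_hornerPoly_le _).trans_eq (by simp [length_blocksOf, add_assoc])

theorem xcbPoly_inj (hn : 0 < n) (hEven : Even n) {X T X' T' : List Bool}
    (hX : X.length < 2 ^ (n / 2)) (hT : T.length < 2 ^ (n / 2))
    (hX' : X'.length < 2 ^ (n / 2)) (hT' : T'.length < 2 ^ (n / 2))
    (h : xcbPoly ι X T = xcbPoly ι X' T') : X = X' ∧ T = T' := by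
  obtain ⟨hmsg, hlenBlock⟩ := hornerPoly_append_singleton_inj.mp h
  obtain ⟨hXlen, hTlen⟩ :=
    length_eq_of_xcbLenBlock_eq hEven hX hT hX' hT' (ι.injective hlenBlock)
  have hnum : ∀ {Z Z' : List Bool}, Z.length = Z'.length →
      (blocksOf n Z).length = (blocksOf n Z').length := fun hZ => by
    rw [length_blocksOf, length_blocksOf, numBlocks_eq hn, numBlocks_eq hn, hZ]
  have hblocks := (List.map_injective_iff.mpr ι.injective)
    (hornerPoly_inj (by simp [hnum hXlen, hnum hTlen]) hmsg)
  obtain ⟨hbX, hbT⟩ := List.append_inj hblocks (hnum hXlen)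
  exact ⟨blocksOf_inj hn hXlen hbX, blocksOf_inj hn hTlen hbT⟩

theorem charP_two_of_map_xor (hι : ∀ x y : BitVec n, ι (x ^^^ y) = ι x + ι y) :
    CharP F 2 := by
  have h0 : ι 0#n = 0 := by simpa using hι 0#n 0#n
  refine CharTwo.of_one_ne_zero_of_two_eq_zero one_ne_zero ?_
  have h1 := hι (ι.symm 1) (ι.symm 1)
  rwa [BitVec.xor_self, Equiv.apply_symm_apply, h0, one_add_one_eq_two, eq_comm] at h1

theorem xcbPoly_add_ne_C [CharP F 2] (hn : 0 < n) (hEven : Even n)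
    {X T X' T' : List Bool} (hne : (X, T) ≠ (X', T'))
    (hX : X.length < 2 ^ (n / 2)) (hT : T.length < 2 ^ (n / 2))
    (hX' : X'.length < 2 ^ (n / 2)) (hT' : T'.length < 2 ^ (n / 2)) (d : F) :
    xcbPoly ι X T + xcbPoly ι X' T' ≠ C d := by
  intro h
  have hd : d = 0 := by
    simpa [xcbPoly, coeff_hornerPoly_zero] using (congrArg (coeff · 0) h).symm
  rw [hd, C_0, CharTwo.add_eq_zero] at h
  obtain ⟨rfl, rfl⟩ := xcbPoly_inj ι hn hEven hX hT hX' hT' h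
  exact hne rfl

end XCB

/-- For distinct inputs `(X,T) ≠ (X',T')` and any `D ∈ {0,1}ⁿ`, a uniformly random
hash key `h` satisfies `Pr[H_h(X,T) ⊕ H_h(X',T') = D] ≤ ℓ/2ⁿ`, where `ℓ` is the maximum
of the degrees of the two hash values as polynomials in `h`. -/
theorem xcbHash_diff_prob (n : ℕ) (hn : 0 < n) (hEven : Even n)
    (F : Type*) [Field F] (ι : BitVec n ≃ F)
    (hι : ∀ x y : BitVec n, ι (x ^^^ y) = ι x + ι y)
    (X T X' T' : List Bool) (hne : (X, T) ≠ (X', T'))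
    (hX : X.length < 2 ^ (n / 2)) (hT : T.length < 2 ^ (n / 2))
    (hX' : X'.length < 2 ^ (n / 2)) (hT' : T'.length < 2 ^ (n / 2))
    (D : BitVec n)
    (ℓ : ℕ) (hℓ : ℓ = max (numBlocks n X + numBlocks n T + 1)
      (numBlocks n X' + numBlocks n T' + 1)) :
    (Nat.card {hk : BitVec n //
        xcbHash ι (ι hk) X T + xcbHash ι (ι hk) X' T' = ι D} : ℝ) / ((2 : ℝ) ^ n) ≤
      (ℓ : ℝ) / ((2 : ℝ) ^ n) := by
  have : CharP F 2 := charP_two_of_map_xor ι hι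
  set P := xcbPoly ι X T + xcbPoly ι X' T'
  have hcard : Nat.card {hk : BitVec n //
      xcbHash ι (ι hk) X T + xcbHash ι (ι hk) X' T' = ι D} ≤ ℓ :=
    calc _ = Nat.card {h : F // P.eval h = ι D} :=
          Nat.card_congr (ι.subtypeEquiv fun hk => by simp [P, eval_xcbPoly])
      _ ≤ P.natDegree := card_eval_eq_le (xcbPoly_add_ne_C ι hn hEven hne hX hT hX' hT' _)
      _ ≤ ℓ := hℓ ▸ natDegree_add_le_of_degree_le
          ((natDegree_xcbPoly_le ι X T).trans (le_max_left _ _))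
          ((natDegree_xcbPoly_le ι X' T').trans (le_max_right _ _))
  gcongr
end

section
/- For every n ≥ 1 and every h ∈ {0,1}^n, the HCTR hash function satisfies H_h(ε) = h and H_h(0) = h, where ε denotes the empty string and 0 denotes the single-bit string 0; in particular, the two distinct inputs ε and 0 collide under H_h for every key h. -/
/-- The HCTR hash function: `H_h(P) = h` if `P` is empty, and otherwise
`H_h(P) = P₁h^{m+1} ⊕ ⋯ ⊕ (P_m‖0^{n-r})h² ⊕ bin_n(|P|)h` (Horner evaluation),
where the equivalence `ι` identifies `{0,1}ⁿ` with `GF(2ⁿ)` (XOR = addition). -/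
def hctrHash {n : ℕ} {F : Type*} [Field F] (ι : BitVec n ≃ F) (h : F)
    (P : List Bool) : F :=
  if P.isEmpty then h
  else ((blocksOf n P).map ι ++ [ι (BitVec.ofNat n P.length)]).foldl
    (fun acc c => (acc + c) * h) 0

/-- For every `n ≥ 1` and every key `h`, the HCTR hash satisfies `H_h(ε) = h` and
`H_h(0) = h` (for the single-bit string `0`); in particular the two distinct inputs
`ε` and `0` collide under `H_h` for every key. -/
theorem hctrHash_empty_and_zero (n : ℕ) (hn : 1 ≤ n)
    (F : Type*) [Field F] (ι : BitVec n ≃ F)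
    (hι : ∀ x y : BitVec n, ι (x ^^^ y) = ι x + ι y)
    (hone : ι 1 = 1) (h : F) :
    hctrHash ι h [] = h ∧ hctrHash ι h [false] = h := by
  obtain ⟨m, rfl⟩ : ∃ m, n = m + 1 := ⟨n - 1, (Nat.succ_pred_eq_of_pos hn).symm⟩
  have h0 : ι 0 = 0 := by
    have := hι 0 0
    simp at this
    exact this
  refine ⟨by simp [hctrHash], ?_⟩
  have hchunk : List.toChunks (m + 1) [false] = [[false]] := by
    simp [List.toChunks, List.toChunks.go]
  have hzero : ∀ k : ℕ, bitsToNat (List.replicate k false) = 0 := by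
    intro k
    induction k with
    | zero => simp [bitsToNat]
    | succ j ih => simpa [bitsToNat, List.replicate_succ] using ih
  have hpad : padBlock (m + 1) [false] = 0 := by
    have h1 : ([false] ++ List.replicate (m + 1 - 1) false)
        = List.replicate (m + 1) false := by
      simp [List.replicate_succ]
    simp only [padBlock, blockToBV]
    rw [show ([false] : List Bool).length = 1 from rfl, h1, hzero]
    rfl
  have hbv1 : ι (BitVec.ofNat (m + 1) 1) = 1 := by
    have : BitVec.ofNat (m + 1) 1 = 1 := rfl
    rw [this, hone]
  show (((blocksOf (m + 1) [false]).map ι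
      ++ [ι (BitVec.ofNat (m + 1) ([false] : List Bool).length)]).foldl
      (fun acc c => (acc + c) * h) 0) = h
  rw [show ([false] : List Bool).length = 1 from rfl]
  rw [blocksOf, hchunk]
  have h0' : ι (0#(m+1)) = 0 := h0
  simp [hpad, h0, h0', hbv1]
end

section
/- Let E_K be any permutation of {0,1}^n, let h ∈ {0,1}^n, and let x ∈ {0,1}^n. With empty tweak, let C^(1) = C_1^(1) = HCTR_{K,h}(x) and C^(2) = C_1^(2) ‖ C_2^(2) = HCTR_{K,h}(x‖0), where |C_1^(2)| = n and C_2^(2) is a single bit. Then: (i) both encryptions compute the same internal value CC = x ⊕ h, so that C_1^(1) = E_K(x ⊕ h) ⊕ h; and (ii) if C_2^(2) = 0 then C_1^(2) = C_1^(1). -/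
/-- Bits of an `n`-bit block, msb first. -/
def bvToBits (n : ℕ) (X : BitVec n) : List Bool :=
  (List.range n).map fun i => X.toNat.testBit (n - 1 - i)

/-- The internal value `CC = P₁ ⊕ H_h(P₂‖…‖P_m‖T)` of HCTR. -/
def hctrCC {n : ℕ} {F : Type*} [Field F] (ι : BitVec n ≃ F) (hk : BitVec n)
    (T P : List Bool) : BitVec n :=
  blockToBV n (P.take n) ^^^ ι.symm (hctrHash ι (ι hk) (P.drop n ++ T))

/-- HCTR encryption with block-cipher permutation `E`, hash key `hk` and tweak `T`:
`CC = P₁ ⊕ H_h(P₂‖…‖P_m‖T)`, `S = CC ⊕ E(CC)`, `C_i = P_i ⊕ E(S ⊕ bin_n(i-1))`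
(truncated to `|P_i|` bits) for `2 ≤ i ≤ m`, and `C₁ = E(CC) ⊕ H_h(C₂‖…‖C_m‖T)`. -/
def hctrEnc {n : ℕ} {F : Type*} [Field F] (ι : BitVec n ≃ F)
    (E : Equiv.Perm (BitVec n)) (hk : BitVec n) (T P : List Bool) : List Bool :=
  let CC : BitVec n := hctrCC ι hk T P
  let S : BitVec n := CC ^^^ E CC
  let Crest : List Bool :=
    (((P.drop n).toChunks n).zipIdx.map fun p =>
      List.zipWith xor p.1 (bvToBits n (E (S ^^^ BitVec.ofNat n (p.2 + 1))))).flatten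
  let C1 : BitVec n := E CC ^^^ ι.symm (hctrHash ι (ι hk) (Crest ++ T))
  bvToBits n C1 ++ Crest

/-!
The padded one-bit block `0` hashes to `(0 · h + bin(1)) · h = h`, exactly like the empty
string. With empty tweak, the plaintexts `x` and `x‖0` therefore produce the same `CC = x ⊕ h`,
and when the one-bit ciphertext block is `0` the first blocks `C₁ = E(CC) ⊕ H_h(C₂)` coincide
as well.
-/

lemma bitsToNat_append_singleton (l : List Bool) (b : Bool) :
    bitsToNat (l ++ [b]) = 2 * bitsToNat l + b.toNat := by
  induction l with
  | nil => cases b <;> simp [bitsToNat]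
  | cons a t ih =>
    simp only [List.cons_append, bitsToNat, ih, List.length_append, List.length_singleton, pow_succ]
    split_ifs <;> ring

lemma bitsToNat_map_testBit (k m : ℕ) :
    bitsToNat ((List.range k).map fun i => m.testBit (k - 1 - i)) = m % 2 ^ k := by
  induction k generalizing m with
  | zero => simp [bitsToNat, Nat.mod_one]
  | succ k ih =>
    have htail : ((List.range k).map fun i => m.testBit (k + 1 - 1 - i))
        = (List.range k).map fun i => (m / 2).testBit (k - 1 - i) := by
      refine List.map_congr_left fun i hi => ?_
      rw [List.mem_range] at hi
      rw [show k + 1 - 1 - i = (k - 1 - i) + 1 by omega, Nat.testBit_succ]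
    rw [List.range_succ, List.map_append, htail, List.map_singleton,
      show k + 1 - 1 - k = 0 by omega, bitsToNat_append_singleton, ih, pow_succ', Nat.mod_mul,
      Nat.testBit_zero]
    rcases Nat.mod_two_eq_zero_or_one m with h | h <;> simp [h]; omega

lemma bitsToNat_replicate_false (k : ℕ) : bitsToNat (List.replicate k false) = 0 := by
  induction k with
  | zero => rfl
  | succ k ih => simp [List.replicate, bitsToNat, ih]

section Bits

variable {n : ℕ}

@[simp]
lemma length_bvToBits (x : BitVec n) : (bvToBits n x).length = n := by
  simp [bvToBits]

@[simp]
lemma blockToBV_bvToBits (x : BitVec n) : blockToBV n (bvToBits n x) = x := by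
  rw [blockToBV, bvToBits, bitsToNat_map_testBit, Nat.mod_eq_of_lt x.isLt, BitVec.ofNat_toNat,
    BitVec.setWidth_eq]

lemma padBlock_singleton_false : padBlock n [false] = 0 := by
  simp [padBlock, blockToBV, bitsToNat, bitsToNat_replicate_false]

lemma toChunks_singleton (hn : 1 ≤ n) (b : Bool) : List.toChunks n [b] = [[b]] := by
  obtain ⟨m, rfl⟩ := Nat.exists_eq_add_of_le hn
  simp [List.toChunks, List.toChunks.go]

end Bits

section HCTR

variable {n : ℕ} {F : Type*} [Field F] (ι : BitVec n ≃ F)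

lemma hctrHash_singleton_false (hn : 1 ≤ n) (hzero : ι 0 = 0) (hone : ι 1 = 1) (h : F) :
    hctrHash ι h [false] = h := by
  rw [hctrHash]
  simp only [List.isEmpty_cons, blocksOf, toChunks_singleton hn, List.map_cons, List.map_nil,
    padBlock_singleton_false, hzero, List.length_singleton,
    show (BitVec.ofNat n 1 : BitVec n) = 1 from rfl, hone, List.cons_append, List.nil_append,
    List.foldl_cons, List.foldl_nil]
  simp

lemma hctrCC_bvToBits_append (hk x : BitVec n) (T l : List Bool) :
    hctrCC ι hk T (bvToBits n x ++ l) = x ^^^ ι.symm (hctrHash ι (ι hk) (l ++ T)) := by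
  rw [hctrCC, List.take_left' (length_bvToBits x), List.drop_left' (length_bvToBits x),
    blockToBV_bvToBits]

lemma hctrEnc_bvToBits (E : Equiv.Perm (BitVec n)) (hk x : BitVec n) (T : List Bool) :
    hctrEnc ι E hk T (bvToBits n x) = bvToBits n (E (hctrCC ι hk T (bvToBits n x)) ^^^
      ι.symm (hctrHash ι (ι hk) T)) := by
  have hdrop : (bvToBits n x).drop n = [] := by simp
  simp only [hctrEnc, hdrop, show List.toChunks n ([] : List Bool) = [] by cases n <;> rfl,
    List.zipIdx_nil, List.map_nil, List.flatten_nil, List.nil_append, List.append_nil]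

lemma hctrEnc_bvToBits_append_singleton (hn : 1 ≤ n) (E : Equiv.Perm (BitVec n))
    (hk x : BitVec n) (T : List Bool) (b : Bool) :
    ∃ c : Bool, hctrEnc ι E hk T (bvToBits n x ++ [b]) =
      bvToBits n (E (hctrCC ι hk T (bvToBits n x ++ [b])) ^^^
        ι.symm (hctrHash ι (ι hk) (c :: T))) ++ [c] := by
  simp only [hctrEnc, List.drop_left' (length_bvToBits x), toChunks_singleton hn,
    List.zipIdx_cons, List.zipIdx_nil, List.map_cons, List.map_nil, List.flatten_cons,
    List.flatten_nil, List.append_nil]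
  generalize hkey : bvToBits n (E (_ ^^^ _ ^^^ BitVec.ofNat n (0 + 1))) = key
  have hlen : 0 < key.length := by rw [← hkey, length_bvToBits]; omega
  obtain ⟨a, t, rfl⟩ := List.exists_cons_of_length_pos hlen
  exact ⟨b ^^ a, rfl⟩

end HCTR

/-- Distinguishing attack on HCTR: with empty tweak, encrypting `x` and `x‖0` computes the
same internal value `CC = x ⊕ h`, so `C₁⁽¹⁾ = E(x ⊕ h) ⊕ h`; moreover if the last bit
`C₂⁽²⁾` of the second ciphertext is `0`, then its first `n` bits coincide with `C⁽¹⁾`. -/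
theorem hctr_distinguishing (n : ℕ) (hn : 1 ≤ n)
    (F : Type*) [Field F] (ι : BitVec n ≃ F)
    (hι : ∀ x y : BitVec n, ι (x ^^^ y) = ι x + ι y)
    (hone : ι 1 = 1)
    (E : Equiv.Perm (BitVec n)) (hk x : BitVec n) :
    hctrCC ι hk [] (bvToBits n x) = x ^^^ hk ∧
    hctrCC ι hk [] (bvToBits n x ++ [false]) = x ^^^ hk ∧
    hctrEnc ι E hk [] (bvToBits n x) = bvToBits n (E (x ^^^ hk) ^^^ hk) ∧
    ((hctrEnc ι E hk [] (bvToBits n x ++ [false])).drop n = [false] →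
      (hctrEnc ι E hk [] (bvToBits n x ++ [false])).take n =
        hctrEnc ι E hk [] (bvToBits n x)) := by
  have hzero : ι 0 = 0 := by simpa using hι 0 0
  have hCC₁ : hctrCC ι hk [] (bvToBits n x) = x ^^^ hk := by
    simpa [hctrHash] using hctrCC_bvToBits_append ι hk x [] []
  have hCC₂ : hctrCC ι hk [] (bvToBits n x ++ [false]) = x ^^^ hk := by
    rw [hctrCC_bvToBits_append, List.append_nil, hctrHash_singleton_false ι hn hzero hone,
      Equiv.symm_apply_apply]
  have hEnc₁ : hctrEnc ι E hk [] (bvToBits n x) = bvToBits n (E (x ^^^ hk) ^^^ hk) := by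
    rw [hctrEnc_bvToBits, hCC₁]
    simp [hctrHash]
  refine ⟨hCC₁, hCC₂, hEnc₁, ?_⟩
  obtain ⟨c, hc⟩ := hctrEnc_bvToBits_append_singleton ι hn E hk x [] false
  rw [hc, List.drop_left' (length_bvToBits _), List.take_left' (length_bvToBits _), hEnc₁, hCC₂]
  rintro ⟨⟩
  rw [hctrHash_singleton_false ι hn hzero hone, Equiv.symm_apply_apply]
end

section
/- Let n be even, let h ∈ GF(2^n) satisfy h^t = 1 for some positive integer t, let X ∈ {0,1}^* have length a positive multiple of n with parse_n(X) = (X_1, …, X_m) and |X| < 2^{n/2}, and let T ∈ {0,1}^* be any string with |T| < 2^{n/2}. If X' is obtained from X by swapping the blocks X_i and X_{i+jt} for some indices with 1 ≤ i < i+jt ≤ m (j a positive integer), then H_h(X', T) = H_h(X, T). In particular, when the hash key h has multiplicative order dividing t, the XCB hash function is invariant under such block swaps (Saarinen's cycling weak-key property). -/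
/-! ### Auxiliary lemmas about `List.toChunks` -/

section Chunks

variable {α : Type*}

lemma go_nil_eq (n : ℕ) (acc : Array α) (r : Array (List α)) :
    List.toChunks.go n [] acc r = (r.push acc.toList).toList := by
  rw [List.toChunks.go]

lemma go_cons_eq (n : ℕ) (a : α) (t : List α) (acc : Array α) (r : Array (List α)) :
    List.toChunks.go n (a :: t) acc r =
      if acc.size = n then List.toChunks.go n t ((Array.mkEmpty n).push a) (r.push acc.toList)
      else List.toChunks.go n t (acc.push a) r := by
  rw [List.toChunks.go]; simp

lemma toChunks_cons_eq (n : ℕ) (x : α) (xs : List α) :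
    List.toChunks (n + 1) (x :: xs) = List.toChunks.go (n + 1) xs #[x] #[] := by
  rw [List.toChunks]; omega

lemma go_acc (n : ℕ) (xs : List α) (acc₁ : Array α) (acc₂ : Array (List α)) :
    List.toChunks.go n xs acc₁ acc₂ = acc₂.toList ++ List.toChunks.go n xs acc₁ #[] := by
  induction xs generalizing acc₁ acc₂ with
  | nil => simp [go_nil_eq]
  | cons x xs ih =>
    rw [go_cons_eq, go_cons_eq]
    split
    · rw [ih _ (acc₂.push acc₁.toList), ih _ (Array.push #[] acc₁.toList)]
      simp
    · rw [ih _ acc₂]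

lemma mkEmpty_push (n : ℕ) (a : α) : (Array.mkEmpty n).push a = #[a] := rfl

lemma go_fill (n : ℕ) (ys xs : List α) (acc : Array α)
    (hsz : acc.size + ys.length = n + 1) :
    List.toChunks.go (n + 1) (ys ++ xs) acc #[] =
      (acc.toList ++ ys) :: List.toChunks (n + 1) xs := by
  induction ys generalizing acc with
  | nil =>
    simp only [List.length_nil, Nat.add_zero] at hsz
    cases xs with
    | nil => simp [go_nil_eq, show List.toChunks (n + 1) ([] : List α) = [] from by
        rw [List.toChunks]]
    | cons x xs' =>
      rw [List.nil_append, go_cons_eq, if_pos hsz, go_acc, mkEmpty_push,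
        ← toChunks_cons_eq]
      simp
  | cons y ys ih =>
    rw [List.cons_append, go_cons_eq,
      if_neg (by simp only [List.length_cons] at hsz; omega)]
    rw [ih (acc.push y) (by simp only [List.length_cons] at hsz; simp; omega)]
    simp

lemma toChunks_flatten (n : ℕ) (hn : 0 < n) (xs : List (List α))
    (hb : ∀ b ∈ xs, b.length = n) : xs.flatten.toChunks n = xs := by
  obtain ⟨k, rfl⟩ : ∃ k, n = k + 1 := ⟨n - 1, by omega⟩
  induction xs with
  | nil => rw [List.flatten_nil, List.toChunks]
  | cons l ls ih =>
    have hl : l.length = k + 1 := hb l (by simp)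
    obtain ⟨y, ys, rfl⟩ : ∃ y ys, l = y :: ys := by
      cases l with
      | nil => simp at hl
      | cons y ys => exact ⟨y, ys, rfl⟩
    rw [List.flatten_cons, List.cons_append, toChunks_cons_eq,
      go_fill k ys ls.flatten #[y] (by simp only [List.length_cons] at hl; simp; omega),
      ih (fun b hb' => hb b (by simp [hb']))]
    simp

end Chunks

/-! ### Horner evaluation lemmas -/

section Horner

variable {F : Type*} [Field F]

/-- Abbreviation for the Horner fold. -/
def hornerS (h : F) (L : List F) : F := L.foldl (fun acc c => (acc + c) * h) 0

lemma foldl_horner (h : F) (L : List F) (a : F) :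
    L.foldl (fun acc c => (acc + c) * h) a = a * h ^ L.length + hornerS h L := by
  induction L generalizing a with
  | nil => simp [hornerS]
  | cons c L ih =>
    simp only [hornerS, List.foldl_cons, List.length_cons]
    rw [ih ((a + c) * h), ih ((0 + c) * h)]
    ring

lemma hornerS_append (h : F) (p q : List F) :
    hornerS h (p ++ q) = hornerS h p * h ^ q.length + hornerS h q := by
  simp only [hornerS, List.foldl_append]
  rw [foldl_horner]
  rfl

lemma hornerS_cons (h : F) (c : F) (q : List F) :
    hornerS h (c :: q) = c * h ^ (q.length + 1) + hornerS h q := by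
  have h0 : hornerS h (c :: q) = q.foldl (fun acc c => (acc + c) * h) ((0 + c) * h) := rfl
  rw [h0, foldl_horner]
  ring

lemma hornerS_swap (h u v : F) (l1 l2 l3 : List F) (hd : h ^ (l2.length + 1) = 1) :
    hornerS h (l1 ++ u :: (l2 ++ v :: l3)) = hornerS h (l1 ++ v :: (l2 ++ u :: l3)) := by
  have key : ∀ w z : F, hornerS h (w :: (l2 ++ z :: l3)) =
      w * h ^ (l3.length + 1) + (hornerS h l2 * h ^ (l3.length + 1) +
        (z * h ^ (l3.length + 1) + hornerS h l3)) := by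
    intro w z
    rw [hornerS_cons, hornerS_append, hornerS_cons]
    simp only [List.length_append, List.length_cons]
    have e : w * h ^ (l2.length + (l3.length + 1) + 1) = w * h ^ (l3.length + 1) := by
      rw [show l2.length + (l3.length + 1) + 1 = (l2.length + 1) + (l3.length + 1) by
        ring, pow_add, hd, one_mul]
    rw [e]
  rw [hornerS_append, hornerS_append, key u v, key v u]
  simp only [List.length_cons, List.length_append]
  ring

end Horner

/-! ### The hash is invariant under swapping full blocks at distance with `h`-period -/

lemma xcbHash_swap {n : ℕ} (hn : 0 < n) {F : Type*} [Field F] (ι : BitVec n ≃ F)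
    (h : F) (u v : List Bool) (l1 l2 l3 : List (List Bool)) (T : List Bool)
    (hu : u.length = n) (hv : v.length = n)
    (h1 : ∀ b ∈ l1, b.length = n) (h2 : ∀ b ∈ l2, b.length = n)
    (h3 : ∀ b ∈ l3, b.length = n)
    (hd : h ^ (l2.length + 1) = 1) :
    xcbHash ι h (l1 ++ u :: (l2 ++ v :: l3)).flatten T =
      xcbHash ι h (l1 ++ v :: (l2 ++ u :: l3)).flatten T := by
  have hmem : ∀ (w z : List Bool), w.length = n → z.length = n →
      ∀ b ∈ l1 ++ w :: (l2 ++ z :: l3), b.length = n := by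
    intro w z hw hz b hb
    simp only [List.mem_append, List.mem_cons] at hb
    rcases hb with hb | rfl | hb | rfl | hb
    · exact h1 b hb
    · exact hw
    · exact h2 b hb
    · exact hz
    · exact h3 b hb
  have hflen : (l1 ++ u :: (l2 ++ v :: l3)).flatten.length =
      (l1 ++ v :: (l2 ++ u :: l3)).flatten.length := by
    simp [List.length_flatten]
    omega
  have hb1 : blocksOf n (l1 ++ u :: (l2 ++ v :: l3)).flatten =
      (l1 ++ u :: (l2 ++ v :: l3)).map (padBlock n) := by
    unfold blocksOf
    rw [toChunks_flatten n hn _ (hmem u v hu hv)]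
  have hb2 : blocksOf n (l1 ++ v :: (l2 ++ u :: l3)).flatten =
      (l1 ++ v :: (l2 ++ u :: l3)).map (padBlock n) := by
    unfold blocksOf
    rw [toChunks_flatten n hn _ (hmem v u hv hu)]
  have hLen : xcbLenBlock n (l1 ++ u :: (l2 ++ v :: l3)).flatten T =
      xcbLenBlock n (l1 ++ v :: (l2 ++ u :: l3)).flatten T := by
    unfold xcbLenBlock
    rw [hflen]
  unfold xcbHash
  rw [hb1, hb2, hLen]
  have := hornerS_swap h (ι (padBlock n u)) (ι (padBlock n v))
    (l1.map (fun b => ι (padBlock n b))) (l2.map (fun b => ι (padBlock n b)))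
    (l3.map (fun b => ι (padBlock n b)) ++
      ((blocksOf n T).map ι ++ [ι (xcbLenBlock n (l1 ++ v :: (l2 ++ u :: l3)).flatten T)]))
    (by simpa using hd)
  simp only [List.map_append, List.map_cons, List.append_assoc, List.cons_append,
    List.map_map, Function.comp] at this ⊢
  exact this

/-- Saarinen's cycling weak-key property of the XCB hash: if `h^t = 1` and `X'` is
obtained from `X` (a string of `m` full `n`-bit blocks) by swapping blocks `X_i` and
`X_{i+jt}`, then `H_h(X',T) = H_h(X,T)`. -/
theorem xcbHash_cycling_weak_key (n : ℕ) (hn : 0 < n) (hEven : Even n)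
    (F : Type*) [Field F] (ι : BitVec n ≃ F)
    (hι : ∀ x y : BitVec n, ι (x ^^^ y) = ι x + ι y)
    (h : F) (t : ℕ) (ht : 0 < t) (hht : h ^ t = 1)
    (xs : List (List Bool)) (hblocks : ∀ b ∈ xs, b.length = n) (hne : xs ≠ [])
    (hlen : xs.flatten.length < 2 ^ (n / 2))
    (T : List Bool) (hT : T.length < 2 ^ (n / 2))
    (i j : ℕ) (hi : 1 ≤ i) (hj : 1 ≤ j) (hij : i + j * t ≤ xs.length) :
    xcbHash ι h
        (((xs.set (i - 1) (xs.getD (i + j * t - 1) [])).set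
          (i + j * t - 1) (xs.getD (i - 1) []))).flatten T =
      xcbHash ι h xs.flatten T := by
  have hjt : 1 ≤ j * t := Nat.one_le_iff_ne_zero.mpr (by positivity)
  set k1 := i - 1 with hk1def
  set k2 := i + j * t - 1 with hk2def
  have hk1 : k1 < xs.length := by omega
  have hk2 : k2 < xs.length := by omega
  have hk12 : k2 = k1 + j * t := by omega
  set a := xs[k1] with ha
  set b := xs[k2] with hb
  set l1 := xs.take k1 with hl1def
  set l2 := (xs.drop (k1 + 1)).take (j * t - 1) with hl2def
  set l3 := xs.drop (k2 + 1) with hl3def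
  have hl1 : l1.length = k1 := by
    rw [hl1def, List.length_take]; omega
  have hl2 : l2.length = j * t - 1 := by
    rw [hl2def, List.length_take, List.length_drop]; omega
  have hxs : xs = l1 ++ a :: (l2 ++ b :: l3) := by
    conv_lhs => rw [← List.take_append_drop k1 xs, List.drop_eq_getElem_cons hk1]
    rw [hl1def, ha]
    congr 2
    conv_lhs => rw [← List.take_append_drop (j * t - 1) (xs.drop (k1 + 1))]
    rw [List.drop_drop, show k1 + 1 + (j * t - 1) = k2 by omega, List.drop_eq_getElem_cons hk2]
  have hgd1 : xs.getD k1 [] = a := List.getD_eq_getElem xs [] hk1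
  have hgd2 : xs.getD k2 [] = b := List.getD_eq_getElem xs [] hk2
  have hset : (xs.set k1 b).set k2 a = l1 ++ b :: (l2 ++ a :: l3) := by
    conv_lhs => rw [hxs]
    rw [List.set_append, if_neg (by omega), hl1, Nat.sub_self]
    show ((l1 ++ (a :: (l2 ++ b :: l3)).set 0 b).set k2 a) = _
    rw [List.set_cons_zero, List.set_append, if_neg (by omega), hl1]
    obtain ⟨d, hd⟩ : ∃ d, k2 - k1 = d + 1 := ⟨j * t - 1, by omega⟩
    rw [hd, List.set_cons_succ, List.set_append, if_neg (by omega),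
      show d - l2.length = 0 by omega, List.set_cons_zero]
  rw [hgd1, hgd2, hset]
  conv_rhs => rw [hxs]
  have hsub1 : ∀ c ∈ l1, c.length = n := fun c hc =>
    hblocks c (List.take_subset _ _ hc)
  have hsub2 : ∀ c ∈ l2, c.length = n := fun c hc =>
    hblocks c (List.drop_subset _ _ (List.take_subset _ _ hc))
  have hsub3 : ∀ c ∈ l3, c.length = n := fun c hc =>
    hblocks c (List.drop_subset _ _ hc)
  exact xcbHash_swap hn ι h b a l1 l2 l3 T
    (hblocks b (List.getElem_mem hk2)) (hblocks a (List.getElem_mem hk1))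
    hsub1 hsub2 hsub3
    (by rw [hl2, Nat.sub_add_cancel hjt, Nat.mul_comm, pow_mul, hht, one_pow])
end
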